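/- Define the second-order differential operator Δ_g acting on smooth functions F : ℝ^5 → ℝ of the coordinates (a, b, p, q, r) by Δ_g F := (1/24)(∂²F/∂a² + ∂²F/∂b² − ∂²F/∂a∂b + 3·∂F/∂a) + (1/8)·e^{2b−2a}·(p²·∂²F/∂q² + ∂²F/∂r² + 2p·∂²F/∂r∂q + e^{−2a−4b}·∂²F/∂q² + e^{−6b}·∂²F/∂p²). Then for all real constants γ_1, …, γ_8, the function F(a,b,p,q,r) = (γ_1 + γ_2·p + γ_3·r + (γ_4 + γ_5·p)·(a+2b))·e^{−a−b} + (γ_6 + γ_7·q + γ_8·r)·e^{−2a} satisfies Δ_g F = −F/12. -/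

import Mathlib

/-- Partial derivative of a function on `ℝ⁵` along the `i`-th coordinate direction. -/
noncomputable def pd5 (i : Fin 5) (F : (Fin 5 → ℝ) → ℝ) : (Fin 5 → ℝ) → ℝ :=
  fun v => deriv (fun t : ℝ => F (Function.update v i t)) (v i)

/-- The Laplace–Beltrami operator of the `SL(3,ℝ)`-invariant Einstein metric on the
space of conics, in the coordinates `(a, b, p, q, r) = (v 0, v 1, v 2, v 3, v 4)`:
`Δ_g F = (1/24)(F_aa + F_bb − F_ab + 3F_a)
  + (1/8)·e^{2b−2a}·(p²F_qq + F_rr + 2pF_rq + e^{−2a−4b}F_qq + e^{−6b}F_pp)`. -/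
noncomputable def laplaceG (F : (Fin 5 → ℝ) → ℝ) : (Fin 5 → ℝ) → ℝ := fun v =>
  (1 / 24) * (pd5 0 (pd5 0 F) v + pd5 1 (pd5 1 F) v - pd5 0 (pd5 1 F) v + 3 * pd5 0 F v)
    + (1 / 8) * Real.exp (2 * v 1 - 2 * v 0) *
        ((v 2) ^ 2 * pd5 3 (pd5 3 F) v + pd5 4 (pd5 4 F) v + 2 * v 2 * pd5 4 (pd5 3 F) v
          + Real.exp (-2 * v 0 - 4 * v 1) * pd5 3 (pd5 3 F) v
          + Real.exp (-6 * v 1) * pd5 2 (pd5 2 F) v)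

/-
Both parts of `Δ_g` act separately on `F`. In `p, q, r` the function `F` is affine in each
variable, and `∂_q F = γ₇ e^{−2a}` depends neither on `q` nor on `r`, so every second derivative
in the second bracket vanishes. In `a, b`, the functions `(α + β(a+2b))e^{−a−b} + γe^{−2a}` with
coefficients depending only on `(p, q, r)` form a family closed under `∂_a` and `∂_b`, which act
on `(α, β, γ)` by explicit linear maps; on this family
`F_aa + F_bb − F_ab + 3F_a = −2F` identically, the `β`-contributions cancelling.
-/

open Function Real

lemma pd5_eq_of_hasDerivAt {i : Fin 5} {F F' : (Fin 5 → ℝ) → ℝ}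
    (h : ∀ v, HasDerivAt (fun t => F (update v i t)) (F' v) (v i)) : pd5 i F = F' :=
  funext fun v => (h v).deriv

lemma pd5_eq_zero_of_update_eq {i : Fin 5} {F : (Fin 5 → ℝ) → ℝ}
    (h : ∀ v t, F (update v i t) = F v) : pd5 i F = 0 := by
  funext v
  simp [pd5, h]

lemma pd5_eq_of_update_eq_add_mul {i : Fin 5} {F c : (Fin 5 → ℝ) → ℝ}
    (h : ∀ v t, F (update v i t) = F v + (t - v i) * c v) : pd5 i F = c :=
  pd5_eq_of_hasDerivAt fun v => by
    simp_rw [h]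
    simpa using (((hasDerivAt_id' (v i)).sub_const (v i)).mul_const (c v)).const_add (F v)

noncomputable def abEigenForm (α β γ : ℝ × ℝ × ℝ → ℝ) (v : Fin 5 → ℝ) : ℝ :=
  (α (v 2, v 3, v 4) + β (v 2, v 3, v 4) * (v 0 + 2 * v 1)) * exp (-(v 0) - v 1)
    + γ (v 2, v 3, v 4) * exp (-2 * v 0)

lemma pd5_zero_abEigenForm (α β γ : ℝ × ℝ × ℝ → ℝ) :
    pd5 0 (abEigenForm α β γ) = abEigenForm (β - α) (-β) ((-2 : ℝ) • γ) :=
  pd5_eq_of_hasDerivAt fun v => by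
    set x := (v 2, v 3, v 4)
    have hline : (fun t => abEigenForm α β γ (update v 0 t))
        = fun t => (α x + β x * (t + 2 * v 1)) * exp (-t - v 1) + γ x * exp (-2 * t) := by
      funext t; simp [abEigenForm, x]
    rw [hline]
    have h1 := (((hasDerivAt_id' (v 0)).add_const (2 * v 1)).const_mul (β x)).const_add (α x)
    have h2 := ((hasDerivAt_id' (v 0)).neg.sub_const (v 1)).exp
    have h3 := (((hasDerivAt_id' (v 0)).const_mul (-2)).exp).const_mul (γ x)
    refine ((h1.mul h2).add h3).congr_deriv ?_
    simp only [abEigenForm, Pi.sub_apply, Pi.neg_apply, Pi.smul_apply, smul_eq_mul, x]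
    ring

lemma pd5_one_abEigenForm (α β γ : ℝ × ℝ × ℝ → ℝ) :
    pd5 1 (abEigenForm α β γ) = abEigenForm ((2 : ℝ) • β - α) (-β) 0 :=
  pd5_eq_of_hasDerivAt fun v => by
    set x := (v 2, v 3, v 4)
    have hline : (fun t => abEigenForm α β γ (update v 1 t))
        = fun t => (α x + β x * (v 0 + 2 * t)) * exp (-(v 0) - t) + γ x * exp (-2 * v 0) := by
      funext t; simp [abEigenForm, x]
    rw [hline]
    have h1 := ((((hasDerivAt_id' (v 1)).const_mul 2).const_add (v 0)).const_mul (β x)).const_add (α x)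
    have h2 := ((hasDerivAt_id' (v 1)).const_sub (-(v 0))).exp
    refine ((h1.mul h2).add_const _).congr_deriv ?_
    simp only [abEigenForm, Pi.sub_apply, Pi.neg_apply, Pi.smul_apply, Pi.zero_apply, smul_eq_mul, x]
    ring

noncomputable def abLaplacian (F : (Fin 5 → ℝ) → ℝ) (v : Fin 5 → ℝ) : ℝ :=
  pd5 0 (pd5 0 F) v + pd5 1 (pd5 1 F) v - pd5 0 (pd5 1 F) v + 3 * pd5 0 F v

lemma abLaplacian_abEigenForm (α β γ : ℝ × ℝ × ℝ → ℝ) (v : Fin 5 → ℝ) :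
    abLaplacian (abEigenForm α β γ) v = -2 * abEigenForm α β γ v := by
  simp only [abLaplacian, pd5_zero_abEigenForm, pd5_one_abEigenForm, abEigenForm, Pi.sub_apply,
    Pi.neg_apply, Pi.smul_apply, Pi.zero_apply]
  ring

/-- For all constants `γ₁, …, γ₈`, the function
`F = (γ₁ + γ₂p + γ₃r + (γ₄ + γ₅p)(a+2b))e^{−a−b} + (γ₆ + γ₇q + γ₈r)e^{−2a}`
satisfies `Δ_g F = −F/12`. -/
theorem explicit_eigenfunctions (γ₁ γ₂ γ₃ γ₄ γ₅ γ₆ γ₇ γ₈ : ℝ)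
    (F : (Fin 5 → ℝ) → ℝ)
    (hF : ∀ v : Fin 5 → ℝ,
      F v = (γ₁ + γ₂ * v 2 + γ₃ * v 4 + (γ₄ + γ₅ * v 2) * (v 0 + 2 * v 1)) *
              Real.exp (-(v 0) - v 1)
            + (γ₆ + γ₇ * v 3 + γ₈ * v 4) * Real.exp (-2 * v 0)) :
    ∀ v : Fin 5 → ℝ, laplaceG F v = -F v / 12 := by
  have hF_form : F = abEigenForm (fun x => γ₁ + γ₂ * x.1 + γ₃ * x.2.2) (fun x => γ₄ + γ₅ * x.1)
      (fun x => γ₆ + γ₇ * x.2.1 + γ₈ * x.2.2) := funext hF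
  have hp : pd5 2 F = fun w => (γ₂ + γ₅ * (w 0 + 2 * w 1)) * exp (-(w 0) - w 1) :=
    pd5_eq_of_update_eq_add_mul fun w t => by
      simp only [hF, update_self, update_of_ne, ne_eq, Fin.reduceEq, not_false_eq_true]; ring
  have hq : pd5 3 F = fun w => γ₇ * exp (-2 * w 0) :=
    pd5_eq_of_update_eq_add_mul fun w t => by
      simp only [hF, update_self, update_of_ne, ne_eq, Fin.reduceEq, not_false_eq_true]; ring
  have hr : pd5 4 F = fun w => γ₃ * exp (-(w 0) - w 1) + γ₈ * exp (-2 * w 0) :=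
    pd5_eq_of_update_eq_add_mul fun w t => by
      simp only [hF, update_self, update_of_ne, ne_eq, Fin.reduceEq, not_false_eq_true]; ring
  have hpp : pd5 2 (pd5 2 F) = 0 := hp ▸ pd5_eq_zero_of_update_eq fun w t => by simp
  have hqq : pd5 3 (pd5 3 F) = 0 := hq ▸ pd5_eq_zero_of_update_eq fun w t => by simp
  have hrq : pd5 4 (pd5 3 F) = 0 := hq ▸ pd5_eq_zero_of_update_eq fun w t => by simp
  have hrr : pd5 4 (pd5 4 F) = 0 := hr ▸ pd5_eq_zero_of_update_eq fun w t => by simp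
  intro v
  have hab : abLaplacian F v = -2 * F v := hF_form ▸ abLaplacian_abEigenForm _ _ _ v
  change 1 / 24 * abLaplacian F v + _ = _
  rw [hab, hpp, hqq, hrq, hrr, Pi.zero_apply]
  ring
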